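/- Let β, N₀, κ, B > 0 and μ, D₀, ν, η ≥ 0 be real numbers with D₀ + νB > 0. Define EE(P, M) = B·log₂(1 + MPβ/(BN₀)) / (P/κ + μ + (D₀ + νB)M + ηB·log₂(1 + MPβ/(BN₀))) for P, M > 0. If (P*, M*) with P* > 0 and M* > 0 satisfies EE(P*, M*) ≥ EE(P, M) for all P, M > 0, then P*/M* = κ(D₀ + νB); equivalently, P*/κ = (D₀ + νB)M*. -/
import Mathlib


/-- The energy efficiency as a function of the transmit power `P` and the (real-valued)
number of antennas `M`, for a fixed bandwidth `B`. -/
noncomputable def EE5 (β N₀ κ B μ D₀ ν η P M : ℝ) : ℝ :=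
  B * Real.logb 2 (1 + M * P * β / (B * N₀)) /
    (P / κ + μ + (D₀ + ν * B) * M +
      η * B * Real.logb 2 (1 + M * P * β / (B * N₀)))

/-- Theorem 2 of the paper: if `(P*, M*)` maximizes the energy efficiency over all
`P, M > 0`, then `P*/M* = κ(D₀ + νB)`, i.e. `P*/κ = (D₀ + νB) M*`. -/
theorem stmt_5 (β N₀ κ B μ D₀ ν η Pstar Mstar : ℝ)
    (hβ : 0 < β) (hN : 0 < N₀) (hκ : 0 < κ) (hB : 0 < B)
    (hμ : 0 ≤ μ) (hD : 0 ≤ D₀) (hν : 0 ≤ ν) (hη : 0 ≤ η)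
    (hDB : 0 < D₀ + ν * B) (hP : 0 < Pstar) (hM : 0 < Mstar)
    (hopt : ∀ P M : ℝ, 0 < P → 0 < M →
      EE5 β N₀ κ B μ D₀ ν η P M ≤ EE5 β N₀ κ B μ D₀ ν η Pstar Mstar) :
    Pstar / Mstar = κ * (D₀ + ν * B) ∧ Pstar / κ = (D₀ + ν * B) * Mstar := by
  have key : Pstar / κ = (D₀ + ν * B) * Mstar := by
    by_contra h
    set c := D₀ + ν * B with hc
    set a := Pstar / κ with ha
    set b := c * Mstar with hb
    have ha0 : 0 < a := div_pos hP hκ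
    have hb0 : 0 < b := mul_pos hDB hM
    set s := Real.sqrt (a * b) with hs
    have hs0 : 0 < s := Real.sqrt_pos.mpr (mul_pos ha0 hb0)
    have hamgm : 2 * s < a + b := by
      have hne : Real.sqrt a ≠ Real.sqrt b := by
        intro he
        apply h
        have := congrArg (· ^ 2) he
        simpa [Real.sq_sqrt ha0.le, Real.sq_sqrt hb0.le] using this
      have h1 : 0 < (Real.sqrt a - Real.sqrt b) ^ 2 :=
        pow_two_pos_of_ne_zero (sub_ne_zero.mpr hne)
      have h2 : (Real.sqrt a - Real.sqrt b) ^ 2 = a + b - 2 * s := by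
        rw [sub_sq, Real.sq_sqrt ha0.le, Real.sq_sqrt hb0.le, hs,
          Real.sqrt_mul ha0.le]
        ring
      linarith [h2 ▸ h1]
    set P' := κ * s with hP'
    set M' := s / c with hM'
    have hP'0 : 0 < P' := mul_pos hκ hs0
    have hM'0 : 0 < M' := div_pos hs0 hDB
    have hs2 : s ^ 2 = a * b := Real.sq_sqrt (mul_pos ha0 hb0).le
    have hprod : M' * P' = Mstar * Pstar := by
      have h1 : M' * P' = s ^ 2 / c * κ := by
        rw [hP', hM']; field_simp
      rw [h1, hs2, ha, hb]
      field_simp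
    set N := B * Real.logb 2 (1 + Mstar * Pstar * β / (B * N₀)) with hN'
    have hN0 : 0 < N := by
      have harg : 1 < 1 + Mstar * Pstar * β / (B * N₀) := by
        have : 0 < Mstar * Pstar * β / (B * N₀) := by positivity
        linarith
      exact mul_pos hB (Real.logb_pos one_lt_two harg)
    have hdstar : EE5 β N₀ κ B μ D₀ ν η Pstar Mstar = N / (a + μ + b + η * N) := by
      rw [EE5, hN', ha, hb, hc]
      ring_nf
    have hdprime : EE5 β N₀ κ B μ D₀ ν η P' M' = N / (s + μ + s + η * N) := by
      rw [EE5, show M' * P' * β / (B * N₀) = Mstar * Pstar * β / (B * N₀) by rw [hprod],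
        ← hN']
      have e1 : P' / κ = s := by rw [hP']; field_simp
      have e2 : (D₀ + ν * B) * M' = s := by rw [hM', ← hc]; field_simp
      rw [e1, e2,
        show η * B * Real.logb 2 (1 + Mstar * Pstar * β / (B * N₀)) = η * N by
          rw [hN']; ring]
    have hdp : 0 < s + μ + s + η * N := by positivity
    have hlt : N / (a + μ + b + η * N) < N / (s + μ + s + η * N) := by
      apply div_lt_div_of_pos_left hN0 hdp
      linarith
    have := hopt P' M' hP'0 hM'0
    rw [hdstar, hdprime] at this
    linarith
  refine ⟨?_, key⟩
  have : Pstar = κ * ((D₀ + ν * B) * Mstar) := by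
    field_simp at key
    linarith [key]
  rw [this]
  field_simp
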